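/- Let D ≥ 3 and N ≥ 1 be integers, k, Λ, ℓ real numbers, G a nonzero real, and μ_1, …, μ_N real numbers. Let a : ℝ → ℝ be twice differentiable with a(t) > 0 and ȧ(t) ≠ 0 for all t, and let ρ, P : ℝ → ℝ be differentiable. Set F_n(t) = (D−2n)·(D(D−1)(k + ȧ(t)²)/a(t)²)^n. Assume that for all t: (1/(2D))·Σ_{n=1}^N μ_n·ℓ^{2n}·F_n(t) = 8πG·ρ(t) + Λ, and −(a(t)/(2D(D−1)·ȧ(t)))·Σ_{n=1}^N μ_n·ℓ^{2n}·(d/dt)F_n(t) = 8πG·(ρ(t) + P(t)). Then for all t: ρ'(t) + (D−1)·(ȧ(t)/a(t))·(ρ(t) + P(t)) = 0. -/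

import Mathlib

/-! Differentiating the first Friedmann equation expresses `Σ μₙ ℓ²ⁿ Ḟₙ` through `ρ̇`; substituting
this into the second equation and cancelling `8πG` leaves the continuity equation. -/

open Finset

lemma differentiable_curvature_ratio {a : ℝ → ℝ} (c k : ℝ) (ha : ∀ t, a t ≠ 0)
    (h1 : Differentiable ℝ a) (h2 : Differentiable ℝ (deriv a)) :
    Differentiable ℝ fun t => c * (k + deriv a t ^ 2) / a t ^ 2 :=
  ((differentiable_const c).mul ((differentiable_const k).add (h2.pow 2))).div (h1.pow 2)
    fun t => pow_ne_zero 2 (ha t)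

lemma deriv_sum_const_mul {ι : Type*} (s : Finset ι) (w : ι → ℝ) {F : ι → ℝ → ℝ} {t : ℝ}
    (hF : ∀ i ∈ s, DifferentiableAt ℝ (F i) t) :
    deriv (fun u => ∑ i ∈ s, w i * F i u) t = ∑ i ∈ s, w i * deriv (F i) t := by
  rw [deriv_fun_sum fun i hi => (hF i hi).const_mul (w i)]
  exact sum_congr rfl fun i hi => deriv_const_mul _ (hF i hi)

lemma continuity_of_friedmann_rates {D c a a' ρ' σ S' : ℝ} (hc : c ≠ 0) (hD : D ≠ 0)
    (hD1 : D - 1 ≠ 0) (ha : a ≠ 0) (ha' : a' ≠ 0)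
    (h1 : 1 / (2 * D) * S' = c * ρ') (h2 : -(a / (2 * D * (D - 1) * a')) * S' = c * σ) :
    ρ' + (D - 1) * (a' / a) * σ = 0 := by
  have hS' : S' = 2 * D * c * ρ' := by
    field_simp at h1
    linear_combination h1
  rw [hS'] at h2
  field_simp at h2
  field_simp
  linear_combination -h2

theorem stmt_13 (D N : ℕ) (hD : 3 ≤ D)
    (k Λ ℓ : ℝ) (G : ℝ) (hG : G ≠ 0) (μ : ℕ → ℝ)
    (a : ℝ → ℝ) (ha : ∀ t, 0 < a t) (ha' : ∀ t, deriv a t ≠ 0)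
    (h1 : Differentiable ℝ a) (h2 : Differentiable ℝ (deriv a))
    (ρ P : ℝ → ℝ) (hρ : Differentiable ℝ ρ) :
    let Fn : ℕ → ℝ → ℝ := fun n t =>
      ((D : ℝ) - 2 * (n : ℝ)) *
        ((D : ℝ) * ((D : ℝ) - 1) * (k + (deriv a t) ^ 2) / (a t) ^ 2) ^ n
    (∀ t : ℝ, 1 / (2 * (D : ℝ)) * ∑ n ∈ Finset.Icc 1 N, μ n * ℓ ^ (2 * n) * Fn n t
        = 8 * Real.pi * G * ρ t + Λ) →
    (∀ t : ℝ, -(a t / (2 * (D : ℝ) * ((D : ℝ) - 1) * deriv a t)) *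
        ∑ n ∈ Finset.Icc 1 N, μ n * ℓ ^ (2 * n) * deriv (Fn n) t
        = 8 * Real.pi * G * (ρ t + P t)) →
    ∀ t : ℝ, deriv ρ t + ((D : ℝ) - 1) * (deriv a t / a t) * (ρ t + P t) = 0 := by
  intro Fn friedmann₁ friedmann₂ t
  have hD3 : (3 : ℝ) ≤ D := by exact_mod_cast hD
  have hFn (n : ℕ) : Differentiable ℝ (Fn n) :=
    ((differentiable_curvature_ratio _ k (fun s => (ha s).ne') h1 h2).pow n).const_mul _
  have hrate : 1 / (2 * (D : ℝ)) * ∑ n ∈ Icc 1 N, μ n * ℓ ^ (2 * n) * deriv (Fn n) t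
      = 8 * Real.pi * G * deriv ρ t := by
    have h := congrArg (deriv · t) (funext friedmann₁)
    rwa [deriv_const_mul _ ((Differentiable.fun_sum fun n _ => (hFn n).const_mul _) t),
      deriv_sum_const_mul _ _ fun n _ => hFn n t, deriv_add_const,
      deriv_const_mul _ (hρ t)] at h
  exact continuity_of_friedmann_rates (by positivity) (by positivity) (by linarith)
    (ha t).ne' (ha' t) hrate (friedmann₂ t)
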